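/- Suppose 𝒫 is stable under F°-pasting. Let τ be an F°-stopping time taking finitely many values, let X ∈ L¹_𝒫 and let P ∈ 𝒫. Then there exists a sequence (Pₙ)_{n≥1} in 𝒫(F°_τ,P) such that the sequence of random variables E^{Pₙ}[X|F°_τ] is P-a.s. nondecreasing in n and its P-a.s. pointwise limit is a P-essential supremum of the family {E^{P'}[X|F°_τ] : P' ∈ 𝒫(F°_τ,P)}. -/

import Mathlib

open MeasureTheory Set Filter

noncomputable section

/-- The canonical path space: continuous paths in `ℝ^d` starting at `0`
(paths indexed by `ℝ`; only the restriction to `[0,T]` is ever used). -/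
def PathSpace (d : ℕ) : Type :=
  {ω : C(ℝ, EuclideanSpace ℝ (Fin d)) // ω 0 = 0}

/-- The raw σ-algebra `F°_t = σ(B_s ; 0 ≤ s ≤ t)` generated by the canonical process. -/
def rawSA (d : ℕ) (t : ℝ) : MeasurableSpace (PathSpace d) :=
  ⨆ s ∈ Set.Icc (0 : ℝ) t, MeasurableSpace.comap (fun ω : PathSpace d => ω.1 s) inferInstance

lemma rawSA_mono {d : ℕ} : Monotone (rawSA d) := by
  intro s t hst
  refine iSup₂_le fun u hu => ?_
  exact le_iSup₂_of_le u ⟨hu.1, hu.2.trans hst⟩ le_rfl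

/-- The raw filtration `F°`, as a filtration indexed by `ℝ` (constant after time `T`),
with ambient σ-algebra `F°_T`. -/
def rawFilt (T : ℝ) (d : ℕ) : Filtration ℝ (rawSA d T) where
  seq t := rawSA d (min t T)
  mono' := fun _ _ hst => rawSA_mono (min_le_min hst le_rfl)
  le' := fun t => rawSA_mono (min_le_right t T)

/-- A bounded function. -/
def BddFun {α : Type*} (f : α → ℝ) : Prop := ∃ C : ℝ, ∀ x, |f x| ≤ C

/-- `Y` is a `P`-essential supremum of the family `F` of random variables. -/
def IsEssSupOf {α : Type*} {m0 : MeasurableSpace α} (P : @Measure α m0) (F : Set (α → ℝ))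
    (Y : α → ℝ) : Prop :=
  (∀ f ∈ F, f ≤ᵐ[P] Y) ∧ ∀ Z : α → ℝ, (∀ f ∈ F, f ≤ᵐ[P] Z) → Y ≤ᵐ[P] Z

/-- Two measures agree on the σ-algebra `G`. -/
def EqOnSA {α : Type*} {m0 : MeasurableSpace α} (G : MeasurableSpace α)
    (P Q : @Measure α m0) : Prop :=
  ∀ A : Set α, MeasurableSet[G] A → P A = Q A

/-- `𝔓(G, P) = {P' ∈ 𝔓 : P' = P on G}`. -/
def MSet {α : Type*} {m0 : MeasurableSpace α} (𝔓 : Set (@Measure α m0))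
    (G : MeasurableSpace α) (P : @Measure α m0) : Set (@Measure α m0) :=
  {Q ∈ 𝔓 | EqOnSA G Q P}

/-- The family `{E^{P'}[X | G] : P' ∈ 𝔓(G, P)}` of conditional expectations. -/
def condExpFam {α : Type*} {m0 : MeasurableSpace α} (𝔓 : Set (@Measure α m0))
    (G : MeasurableSpace α) (P : @Measure α m0) (X : α → ℝ) : Set (α → ℝ) :=
  {g | ∃ Q ∈ MSet 𝔓 G P, g = condExp G Q X}

/-- `X ∈ L¹_𝔓` : `mT`-measurable with `sup_{P ∈ 𝔓} E^P[|X|] < ∞`. -/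
def MemL1 {α : Type*} {m0 : MeasurableSpace α} (mT : MeasurableSpace α)
    (𝔓 : Set (@Measure α m0)) (X : α → ℝ) : Prop :=
  Measurable[mT] X ∧ (∀ P ∈ 𝔓, Integrable X P) ∧ ∃ M : ℝ, ∀ P ∈ 𝔓, ∫ ω, |X ω| ∂P ≤ M

/-- `Pb` is the pasting of `(P₁, P₂)` over `(Λ, G)` under `P`, characterized through
integrals of bounded measurable functions. -/
def IsPastingOf {α : Type*} {m0 : MeasurableSpace α} (mT : MeasurableSpace α)
    (G : MeasurableSpace α) (P P₁ P₂ Pb : @Measure α m0) (Λ : Set α) : Prop :=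
  ∀ h : α → ℝ, Measurable[mT] h → BddFun h →
    ∫ x, h x ∂Pb
      = ∫ x, (Λ.indicator (condExp G P₁ h) x + Λᶜ.indicator (condExp G P₂ h) x) ∂P

/-- `𝔓` is stable under `F°`-pasting (along finite-valued `F°`-stopping times). -/
def StableUnderPasting (T : ℝ) (d : ℕ)
    (𝔓 : Set (@Measure (PathSpace d) (rawSA d T))) : Prop :=
  ∀ P ∈ 𝔓, ∀ τ : PathSpace d → ℝ, ∀ hτ : IsStoppingTime (rawFilt T d) (fun ω => (τ ω : WithTop ℝ)),
    (Set.range τ).Finite → (∀ ω, τ ω ∈ Set.Icc (0 : ℝ) T) →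
    ∀ Λ : Set (PathSpace d), MeasurableSet[hτ.measurableSpace] Λ →
    ∀ P₁ ∈ MSet 𝔓 hτ.measurableSpace P, ∀ P₂ ∈ MSet 𝔓 hτ.measurableSpace P,
    ∀ Pb : @Measure (PathSpace d) (rawSA d T),
      IsPastingOf (rawSA d T) hτ.measurableSpace P P₁ P₂ Pb Λ → Pb ∈ 𝔓

end

/-!
Pasting two measures of `𝔓(F°_τ, P)` along the `F°_τ`-measurable set where the first
conditional expectation of `X` dominates the second gives again a measure of `𝔓(F°_τ, P)`, whose
conditional expectation is the maximum of the two; so the family of conditional expectations is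
upward directed, and its `P`-integrals are bounded by `sup_𝔓 E[|X|]`. In such a family, pick
members whose `E^P[arctan f]` approach the supremum and replace them by successive maxima. The
resulting increasing sequence converges to a finite limit by monotone convergence, and that limit
dominates every member `c` of the family: `E^P[arctan (max Y c)]` cannot exceed the supremum
`E^P[arctan Y]`, and `arctan` is strictly increasing.
-/

open scoped Topology

section EqOnSA

variable {α : Type*} {G m0 : MeasurableSpace α} {P Q : Measure α}

theorem EqOnSA.trim_eq (hG : G ≤ m0) (h : EqOnSA G Q P) : Q.trim hG = P.trim hG :=
  @Measure.ext α G _ _ fun s hs => by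
    rw [trim_measurableSet_eq hG hs, trim_measurableSet_eq hG hs, h s hs]

theorem EqOnSA.integral_eq (hG : G ≤ m0) (h : EqOnSA G Q P) {f : α → ℝ}
    (hf : StronglyMeasurable[G] f) : ∫ x, f x ∂Q = ∫ x, f x ∂P := by
  rw [integral_trim hG hf, integral_trim hG hf, h.trim_eq hG]

theorem EqOnSA.integrable (hG : G ≤ m0) (h : EqOnSA G Q P) {f : α → ℝ}
    (hf : StronglyMeasurable[G] f) (hfi : Integrable f Q) : Integrable f P :=
  integrable_of_integrable_trim hG (h.trim_eq hG ▸ hfi.trim hG hf)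

theorem EqOnSA.ae (h : EqOnSA G Q P) {p : α → Prop} (hp : MeasurableSet[G] {x | p x})
    (hae : ∀ᵐ x ∂Q, p x) : ∀ᵐ x ∂P, p x := by
  rw [ae_iff] at hae ⊢
  exact (h _ hp.compl).symm.trans hae

end EqOnSA

section Pasting

variable {α : Type*} {G m0 : MeasurableSpace α} {P Q₁ Q₂ : Measure α} {Λ : Set α}

noncomputable def pasting (Q₁ Q₂ : Measure α) (Λ : Set α) : Measure α :=
  Q₁.restrict Λ + Q₂.restrict Λᶜ

instance [IsFiniteMeasure Q₁] [IsFiniteMeasure Q₂] : IsFiniteMeasure (pasting Q₁ Q₂ Λ) := by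
  unfold pasting; infer_instance

theorem restrict_pasting_self (hΛ : MeasurableSet Λ) :
    (pasting Q₁ Q₂ Λ).restrict Λ = Q₁.restrict Λ := by
  rw [pasting, Measure.restrict_add, Measure.restrict_restrict hΛ,
    Measure.restrict_restrict hΛ, inter_self, inter_compl_self, Measure.restrict_empty, add_zero]

theorem restrict_pasting_compl (hΛ : MeasurableSet Λ) :
    (pasting Q₁ Q₂ Λ).restrict Λᶜ = Q₂.restrict Λᶜ := by
  rw [pasting, Measure.restrict_add, Measure.restrict_restrict hΛ.compl,
    Measure.restrict_restrict hΛ.compl, inter_self, compl_inter_self, Measure.restrict_empty,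
    zero_add]

theorem eqOnSA_pasting (hG : G ≤ m0) (h₁ : EqOnSA G Q₁ P) (h₂ : EqOnSA G Q₂ P)
    (hΛ : MeasurableSet[G] Λ) : EqOnSA G (pasting Q₁ Q₂ Λ) P := by
  intro A hA
  rw [pasting, Measure.add_apply, Measure.restrict_apply (hG _ hA),
    Measure.restrict_apply (hG _ hA), h₁ _ (hA.inter hΛ), h₂ _ (hA.inter hΛ.compl),
    ← sdiff_eq, measure_inter_add_sdiff A (hG _ hΛ)]

theorem integral_pasting (hG : G ≤ m0) [IsFiniteMeasure Q₁] [IsFiniteMeasure Q₂]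
    (h₁ : EqOnSA G Q₁ P) (h₂ : EqOnSA G Q₂ P) (hΛ : MeasurableSet[G] Λ) {h : α → ℝ}
    (hh₁ : Integrable h Q₁) (hh₂ : Integrable h Q₂) :
    ∫ x, h x ∂pasting Q₁ Q₂ Λ
      = ∫ x, (Λ.indicator (Q₁[h|G]) x + Λᶜ.indicator (Q₂[h|G]) x) ∂P := by
  have hsm₁ : StronglyMeasurable[G] (Λ.indicator (Q₁[h|G])) :=
    stronglyMeasurable_condExp.indicator hΛ
  have hsm₂ : StronglyMeasurable[G] (Λᶜ.indicator (Q₂[h|G])) :=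
    stronglyMeasurable_condExp.indicator hΛ.compl
  rw [pasting, integral_add_measure hh₁.integrableOn hh₂.integrableOn,
    integral_add (h₁.integrable hG hsm₁ (integrable_condExp.indicator (hG _ hΛ)))
      (h₂.integrable hG hsm₂ (integrable_condExp.indicator (hG _ hΛ.compl))),
    ← h₁.integral_eq hG hsm₁, ← h₂.integral_eq hG hsm₂, integral_indicator (hG _ hΛ),
    integral_indicator (hG _ hΛ.compl), setIntegral_condExp hG hh₁ hΛ,
    setIntegral_condExp hG hh₂ hΛ.compl]

theorem isPastingOf_pasting (hG : G ≤ m0) [IsFiniteMeasure Q₁] [IsFiniteMeasure Q₂]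
    (h₁ : EqOnSA G Q₁ P) (h₂ : EqOnSA G Q₂ P) (hΛ : MeasurableSet[G] Λ) :
    IsPastingOf m0 G P Q₁ Q₂ (pasting Q₁ Q₂ Λ) Λ := by
  rintro h hh ⟨C, hC⟩
  exact integral_pasting hG h₁ h₂ hΛ (.of_bound hh.aestronglyMeasurable C (ae_of_all _ hC))
    (.of_bound hh.aestronglyMeasurable C (ae_of_all _ hC))

theorem condExp_pasting_ae_eq (hG : G ≤ m0) [IsFiniteMeasure Q₁] [IsFiniteMeasure Q₂]
    (h₁ : EqOnSA G Q₁ P) (h₂ : EqOnSA G Q₂ P) (hΛ : MeasurableSet[G] Λ) {X : α → ℝ}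
    (hX₁ : Integrable X Q₁) (hX₂ : Integrable X Q₂) :
    (pasting Q₁ Q₂ Λ)[X|G] =ᵐ[P] Λ.indicator (Q₁[X|G]) + Λᶜ.indicator (Q₂[X|G]) := by
  have hΛm : MeasurableSet[m0] Λ := hG _ hΛ
  have hX : Integrable X (pasting Q₁ Q₂ Λ) := hX₁.restrict.add_measure hX₂.restrict
  have hsm : StronglyMeasurable[G] (Λ.indicator (Q₁[X|G]) + Λᶜ.indicator (Q₂[X|G])) :=
    (stronglyMeasurable_condExp.indicator hΛ).add (stronglyMeasurable_condExp.indicator hΛ.compl)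
  refine (eqOnSA_pasting hG h₁ h₂ hΛ).ae
    (stronglyMeasurable_condExp.measurableSet_eq_fun hsm) ?_
  refine ae_add_measure_iff.2 ⟨?_, ?_⟩
  · have hPb := condExp_restrict_ae_eq_restrict hG hΛ hX
    have hQ₁ := condExp_restrict_ae_eq_restrict hG hΛ hX₁
    rw [restrict_pasting_self hΛm] at hPb
    filter_upwards [hPb, hQ₁, ae_restrict_mem hΛm] with x hxPb hxQ₁ hxΛ
    rw [Pi.add_apply, indicator_of_mem hxΛ, indicator_of_notMem (notMem_compl_iff.2 hxΛ),
      add_zero, ← hxPb, hxQ₁]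
  · have hPb := condExp_restrict_ae_eq_restrict hG hΛ.compl hX
    have hQ₂ := condExp_restrict_ae_eq_restrict hG hΛ.compl hX₂
    rw [restrict_pasting_compl hΛm] at hPb
    filter_upwards [hPb, hQ₂, ae_restrict_mem hΛm.compl] with x hxPb hxQ₂ hxΛ
    rw [Pi.add_apply, indicator_of_notMem hxΛ, indicator_of_mem hxΛ, zero_add, ← hxPb, hxQ₂]

end Pasting

section EssSup

open Real
open scoped ENNReal

variable {α : Type*} {m0 : MeasurableSpace α} {P : Measure α}

theorem Real.norm_arctan_le (x : ℝ) : ‖arctan x‖ ≤ π / 2 := by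
  rw [Real.norm_eq_abs, abs_le]
  exact ⟨(neg_pi_div_two_lt_arctan x).le, (arctan_lt_pi_div_two x).le⟩

theorem integrable_arctan_comp [IsFiniteMeasure P] {f : α → ℝ} (hf : AEStronglyMeasurable f P) :
    Integrable (fun x => arctan (f x)) P :=
  .of_bound (continuous_arctan.comp_aestronglyMeasurable hf) (π / 2)
    (ae_of_all _ fun _ => norm_arctan_le _)

theorem tendsto_integral_arctan_comp [IsFiniteMeasure P] {f : ℕ → α → ℝ} {Y : α → ℝ}
    (hf : ∀ n, AEStronglyMeasurable (f n) P)
    (hY : ∀ᵐ x ∂P, Tendsto (fun n => f n x) atTop (𝓝 (Y x))) :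
    Tendsto (fun n => ∫ x, arctan (f n x) ∂P) atTop (𝓝 (∫ x, arctan (Y x) ∂P)) :=
  tendsto_integral_of_dominated_convergence (fun _ => π / 2)
    (fun n => continuous_arctan.comp_aestronglyMeasurable (hf n)) (integrable_const _)
    (fun _ => ae_of_all _ fun _ => norm_arctan_le _)
    (hY.mono fun _ hx => (continuous_arctan.tendsto _).comp hx)

theorem ae_le_of_integral_arctan_max_le [IsFiniteMeasure P] {Y c : α → ℝ}
    (hY : AEStronglyMeasurable Y P) (hc : AEStronglyMeasurable c P)
    (h : ∫ x, arctan (max (Y x) (c x)) ∂P ≤ ∫ x, arctan (Y x) ∂P) : c ≤ᵐ[P] Y := by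
  have hle : (fun x => arctan (Y x)) ≤ᵐ[P] fun x => arctan (max (Y x) (c x)) :=
    ae_of_all _ fun x => arctan_mono (le_max_left _ _)
  have hmax := integrable_arctan_comp (hY.sup hc)
  have heq := (integral_eq_iff_of_ae_le (integrable_arctan_comp hY) hmax hle).1
    (le_antisymm (integral_mono_ae (integrable_arctan_comp hY) hmax hle) h)
  filter_upwards [heq] with x hx
  exact max_eq_left_iff.1 (arctan_injective hx).symm

theorem ae_tendsto_iSup_of_monotone_of_integral_le {f : ℕ → α → ℝ} {C : ℝ}
    (hf : ∀ n, Integrable (f n) P) (hmono : ∀ᵐ x ∂P, Monotone fun n => f n x)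
    (hC : ∀ n, ∫ x, f n x ∂P ≤ C) :
    ∀ᵐ x ∂P, Tendsto (fun n => f n x) atTop (𝓝 (⨆ n, f n x)) := by
  set g : ℕ → α → ℝ≥0∞ := fun n x => ENNReal.ofReal (f n x - f 0 x)
  have hg_meas : ∀ n, AEMeasurable (g n) P := fun n =>
    ((hf n).sub (hf 0)).aemeasurable.ennreal_ofReal
  have hg_mono : ∀ᵐ x ∂P, Monotone fun n => g n x := by
    filter_upwards [hmono] with x hx n k hnk
    exact ENNReal.ofReal_le_ofReal (sub_le_sub_right (hx hnk) _)
  have hg_lint : ∀ n, ∫⁻ x, g n x ∂P ≤ ENNReal.ofReal (C - ∫ x, f 0 x ∂P) := by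
    intro n
    have hnn : 0 ≤ᵐ[P] fun x => f n x - f 0 x := by
      filter_upwards [hmono] with x hx using sub_nonneg.2 (hx (Nat.zero_le n))
    calc ∫⁻ x, g n x ∂P = ENNReal.ofReal (∫ x, f n x - f 0 x ∂P) :=
          (ofReal_integral_eq_lintegral_ofReal ((hf n).sub (hf 0)) hnn).symm
      _ ≤ _ := by
          rw [integral_sub (hf n) (hf 0)]
          exact ENNReal.ofReal_le_ofReal (sub_le_sub_right (hC n) _)
  have hfin : ∀ᵐ x ∂P, ⨆ n, g n x < ∞ := by
    refine ae_lt_top' (AEMeasurable.iSup hg_meas) ?_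
    rw [lintegral_iSup' hg_meas hg_mono]
    exact ne_top_of_le_ne_top ENNReal.ofReal_ne_top (iSup_le hg_lint)
  filter_upwards [hmono, hfin] with x hx hxfin
  refine tendsto_atTop_ciSup hx ⟨f 0 x + (⨆ n, g n x).toReal, ?_⟩
  rintro _ ⟨n, rfl⟩
  have := (ENNReal.ofReal_le_iff_le_toReal hxfin.ne).1 (le_iSup (fun n => g n x) n)
  linarith

def IsAEDirected (P : Measure α) (F : Set (α → ℝ)) : Prop :=
  ∀ f₁ ∈ F, ∀ f₂ ∈ F, ∃ f₃ ∈ F, f₃ =ᵐ[P] f₁ ⊔ f₂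

variable {F : Set (α → ℝ)}

theorem IsAEDirected.exists_ae_monotone_ge (hF : IsAEDirected P F) {g : ℕ → α → ℝ}
    (hg : ∀ n, g n ∈ F) :
    ∃ f : ℕ → α → ℝ, (∀ n, f n ∈ F) ∧ (∀ᵐ x ∂P, Monotone fun n => f n x) ∧
      ∀ n, g n ≤ᵐ[P] f n := by
  choose! sup hsupF hsup using hF
  let f : ℕ → α → ℝ := fun n => Nat.rec (g 0) (fun k fk => sup fk (g (k + 1))) n
  have hfF : ∀ n, f n ∈ F := by
    intro n
    induction n with
    | zero => exact hg 0
    | succ k ih => exact hsupF _ ih _ (hg (k + 1))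
  have hsucc : ∀ n, f (n + 1) =ᵐ[P] f n ⊔ g (n + 1) := fun n => hsup _ (hfF n) _ (hg (n + 1))
  refine ⟨f, hfF, ?_, ?_⟩
  · have : ∀ᵐ x ∂P, ∀ n, f n x ≤ f (n + 1) x := ae_all_iff.2 fun n => by
      filter_upwards [hsucc n] with x hx
      exact hx ▸ le_sup_left
    filter_upwards [this] with x hx using monotone_nat_of_le_succ hx
  · rintro (_ | n)
    · exact ae_of_all _ fun _ => le_rfl
    · filter_upwards [hsucc n] with x hx
      exact hx ▸ le_sup_right

theorem IsAEDirected.exists_monotone_tendsto_isEssSupOf [IsFiniteMeasure P]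
    (hF : IsAEDirected P F) (hne : F.Nonempty) (hint : ∀ f ∈ F, Integrable f P)
    (hbdd : BddAbove ((fun f => ∫ x, f x ∂P) '' F)) :
    ∃ (f : ℕ → α → ℝ) (Y : α → ℝ), (∀ n, f n ∈ F) ∧ (∀ᵐ x ∂P, Monotone fun n => f n x) ∧
      (∀ᵐ x ∂P, Tendsto (fun n => f n x) atTop (𝓝 (Y x))) ∧ IsEssSupOf P F Y := by
  set J : (α → ℝ) → ℝ := fun f => ∫ x, arctan (f x) ∂P
  have hJ_bdd : BddAbove (J '' F) := by
    refine ⟨π / 2 * P.real univ, ?_⟩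
    rintro _ ⟨f, -, rfl⟩
    exact (le_abs_self _).trans
      (norm_integral_le_of_norm_le_const (ae_of_all _ fun _ => norm_arctan_le _))
  obtain ⟨u, -, hu_tend, hu_mem⟩ := exists_seq_tendsto_sSup (hne.image J) hJ_bdd
  choose g hgF hgJ using hu_mem
  obtain ⟨f, hfF, hmono, hgf⟩ := hF.exists_ae_monotone_ge hgF
  have hmeas : ∀ n, AEStronglyMeasurable (f n) P := fun n => (hint _ (hfF n)).1
  obtain ⟨C, hC⟩ := hbdd
  have hconv := ae_tendsto_iSup_of_monotone_of_integral_le (fun n => hint _ (hfF n)) hmono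
    fun n => hC ⟨_, hfF n, rfl⟩
  set Y : α → ℝ := fun x => ⨆ n, f n x
  have hYmeas : AEStronglyMeasurable Y P := aestronglyMeasurable_of_tendsto_ae atTop hmeas hconv
  have hJY : J Y = sSup (J '' F) := by
    refine tendsto_nhds_unique (tendsto_integral_arctan_comp hmeas hconv)
      (tendsto_of_tendsto_of_tendsto_of_le_of_le hu_tend tendsto_const_nhds (fun n => ?_)
        fun n => le_csSup hJ_bdd ⟨_, hfF n, rfl⟩)
    rw [← hgJ n]
    exact integral_mono_ae (integrable_arctan_comp (hint _ (hgF n)).1)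
      (integrable_arctan_comp (hmeas n)) ((hgf n).mono fun x hx => arctan_mono hx)
  refine ⟨f, Y, hfF, hmono, hconv, fun c hc => ?_, fun Z hZ => ?_⟩
  · have hc_meas := (hint c hc).1
    have hmax_le : ∀ n, ∫ x, arctan (max (f n x) (c x)) ∂P ≤ sSup (J '' F) := fun n => by
      obtain ⟨h, hhF, hh⟩ := hF _ (hfF n) _ hc
      calc ∫ x, arctan (max (f n x) (c x)) ∂P = J h :=
            integral_congr_ae (hh.mono fun x hx => by beta_reduce; rw [hx]; rfl)
        _ ≤ sSup (J '' F) := le_csSup hJ_bdd ⟨h, hhF, rfl⟩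
    refine ae_le_of_integral_arctan_max_le hYmeas hc_meas ?_
    rw [show ∫ x, arctan (Y x) ∂P = sSup (J '' F) from hJY]
    exact le_of_tendsto' (tendsto_integral_arctan_comp (fun n => (hmeas n).sup hc_meas)
      (hconv.mono fun x hx => hx.max tendsto_const_nhds)) hmax_le
  · have hfZ : ∀ᵐ x ∂P, ∀ n, f n x ≤ Z x := ae_all_iff.2 fun n => hZ _ (hfF n)
    filter_upwards [hfZ, hconv] with x hx hxt using le_of_tendsto' hxt hx

end EssSup

section CondExpFam

variable {α : Type*} {G m0 : MeasurableSpace α} {𝔓 : Set (Measure α)} {P : Measure α}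
  {X : α → ℝ}

theorem integrable_of_mem_condExpFam (hG : G ≤ m0) {f : α → ℝ}
    (hf : f ∈ condExpFam 𝔓 G P X) : Integrable f P := by
  obtain ⟨Q, hQ, rfl⟩ := hf
  exact hQ.2.integrable hG stronglyMeasurable_condExp integrable_condExp

theorem integral_le_of_mem_condExpFam (hG : G ≤ m0) (hfin : ∀ Q ∈ 𝔓, IsFiniteMeasure Q)
    {M : ℝ} (hM : ∀ Q ∈ 𝔓, ∫ x, |X x| ∂Q ≤ M) {f : α → ℝ} (hf : f ∈ condExpFam 𝔓 G P X) :
    ∫ x, f x ∂P ≤ M := by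
  obtain ⟨Q, hQ, rfl⟩ := hf
  have := hfin Q hQ.1
  rw [← hQ.2.integral_eq hG stronglyMeasurable_condExp, integral_condExp hG]
  exact (le_abs_self _).trans (abs_integral_le_integral_abs.trans (hM Q hQ.1))

theorem isAEDirected_condExpFam (hG : G ≤ m0) (hfin : ∀ Q ∈ 𝔓, IsFiniteMeasure Q)
    (hX : ∀ Q ∈ 𝔓, Integrable X Q)
    (hpaste : ∀ Q₁ ∈ MSet 𝔓 G P, ∀ Q₂ ∈ MSet 𝔓 G P, ∀ Λ, MeasurableSet[G] Λ →
      pasting Q₁ Q₂ Λ ∈ 𝔓) :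
    IsAEDirected P (condExpFam 𝔓 G P X) := by
  rintro _ ⟨Q₁, hQ₁, rfl⟩ _ ⟨Q₂, hQ₂, rfl⟩
  have := hfin Q₁ hQ₁.1
  have := hfin Q₂ hQ₂.1
  set Λ := {x | Q₂[X|G] x ≤ Q₁[X|G] x}
  have hΛ : MeasurableSet[G] Λ :=
    measurableSet_le stronglyMeasurable_condExp.measurable stronglyMeasurable_condExp.measurable
  refine ⟨_, ⟨_, ⟨hpaste Q₁ hQ₁ Q₂ hQ₂ Λ hΛ, eqOnSA_pasting hG hQ₁.2 hQ₂.2 hΛ⟩, rfl⟩, ?_⟩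
  filter_upwards [condExp_pasting_ae_eq hG hQ₁.2 hQ₂.2 hΛ (hX Q₁ hQ₁.1) (hX Q₂ hQ₂.1)]
    with x hx
  rw [hx, Pi.add_apply, Pi.sup_apply]
  by_cases hxΛ : x ∈ Λ
  · rw [indicator_of_mem hxΛ, indicator_of_notMem (notMem_compl_iff.2 hxΛ), add_zero,
      sup_of_le_left hxΛ]
  · rw [indicator_of_notMem hxΛ, indicator_of_mem hxΛ, zero_add,
      sup_of_le_right (le_of_not_ge hxΛ)]

end CondExpFam

theorem statement1_general {T : ℝ} {d : ℕ}
    (𝔓 : Set (@Measure (PathSpace d) (rawSA d T)))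
    (hprob : ∀ P ∈ 𝔓, IsProbabilityMeasure P)
    (hstable : StableUnderPasting T d 𝔓)
    (τ : PathSpace d → ℝ) (hτ : IsStoppingTime (rawFilt T d) (fun ω => (τ ω : WithTop ℝ)))
    (hτfin : (Set.range τ).Finite) (hτmem : ∀ ω, τ ω ∈ Set.Icc (0 : ℝ) T)
    (X : PathSpace d → ℝ) (hX : MemL1 (rawSA d T) 𝔓 X)
    (P : @Measure (PathSpace d) (rawSA d T)) (hP : P ∈ 𝔓) :
    ∃ (Pn : ℕ → @Measure (PathSpace d) (rawSA d T)) (Y : PathSpace d → ℝ),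
      (∀ n, Pn n ∈ MSet 𝔓 hτ.measurableSpace P) ∧
      (∀ᵐ ω ∂P, Monotone fun n => condExp hτ.measurableSpace (Pn n) X ω) ∧
      (∀ᵐ ω ∂P, Tendsto (fun n => condExp hτ.measurableSpace (Pn n) X ω) atTop (nhds (Y ω))) ∧
      IsEssSupOf P (condExpFam 𝔓 hτ.measurableSpace P X) Y := by
  have hG := hτ.measurableSpace_le
  have hfin : ∀ Q ∈ 𝔓, IsFiniteMeasure Q := fun Q hQ =>
    have := hprob Q hQ; inferInstance
  have := hprob P hP
  obtain ⟨-, hXint, M, hXbd⟩ := hX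
  have hpaste : ∀ Q₁ ∈ MSet 𝔓 hτ.measurableSpace P, ∀ Q₂ ∈ MSet 𝔓 hτ.measurableSpace P,
      ∀ Λ, MeasurableSet[hτ.measurableSpace] Λ → pasting Q₁ Q₂ Λ ∈ 𝔓 :=
    fun Q₁ hQ₁ Q₂ hQ₂ Λ hΛ =>
      have := hfin Q₁ hQ₁.1
      have := hfin Q₂ hQ₂.1
      hstable P hP τ hτ hτfin hτmem Λ hΛ Q₁ hQ₁ Q₂ hQ₂ _ (isPastingOf_pasting hG hQ₁.2 hQ₂.2 hΛ)
  obtain ⟨f, Y, hfF, hmono, hconv, hess⟩ :=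
    (isAEDirected_condExpFam hG hfin hXint hpaste).exists_monotone_tendsto_isEssSupOf
      ⟨_, P, ⟨hP, fun _ _ => rfl⟩, rfl⟩ (fun _ => integrable_of_mem_condExpFam hG)
      ⟨M, by rintro _ ⟨f, hf, rfl⟩; exact integral_le_of_mem_condExpFam hG hfin hXbd hf⟩
  choose Pn hPn hfPn using hfF
  simp only [hfPn] at hmono hconv
  exact ⟨Pn, Y, hPn, hmono, hconv, hess⟩

/-- under stability under pasting, the essential supremum of the family of
conditional expectations is attained as an increasing limit along a sequence in `𝔓(F°_τ, P)`. -/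
theorem statement1 {T : ℝ} (hT : 0 < T) {d : ℕ}
    (𝔓 : Set (@Measure (PathSpace d) (rawSA d T))) (h𝔓 : 𝔓.Nonempty)
    (hprob : ∀ P ∈ 𝔓, IsProbabilityMeasure P)
    (hstable : StableUnderPasting T d 𝔓)
    (τ : PathSpace d → ℝ) (hτ : IsStoppingTime (rawFilt T d) (fun ω => (τ ω : WithTop ℝ)))
    (hτfin : (Set.range τ).Finite) (hτmem : ∀ ω, τ ω ∈ Set.Icc (0 : ℝ) T)
    (X : PathSpace d → ℝ) (hX : MemL1 (rawSA d T) 𝔓 X)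
    (P : @Measure (PathSpace d) (rawSA d T)) (hP : P ∈ 𝔓) :
    ∃ (Pn : ℕ → @Measure (PathSpace d) (rawSA d T)) (Y : PathSpace d → ℝ),
      (∀ n, Pn n ∈ MSet 𝔓 hτ.measurableSpace P) ∧
      (∀ᵐ ω ∂P, Monotone fun n => condExp hτ.measurableSpace (Pn n) X ω) ∧
      (∀ᵐ ω ∂P, Tendsto (fun n => condExp hτ.measurableSpace (Pn n) X ω) atTop (nhds (Y ω))) ∧
      IsEssSupOf P (condExpFam 𝔓 hτ.measurableSpace P X) Y :=
  statement1_general 𝔓 hprob hstable τ hτ hτfin hτmem X hX P hP
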